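/- arXiv:2401.17722 — 3 statements merged into one kernel-verified Lean document; each statement's English description precedes it below -/
import Mathlib

section
/- Let α > 2 and p ∈ [1, 2] be real numbers. There exists a constant C < ∞ such that for every integer n ≥ 1 and every integer t ≥ 0, the following holds: defining the step configuration a ∈ ℤ^ℤ by a_i = t if |i| < n and a_i = 0 if |i| ≥ n, one has Σ_{(i,j)∈ℤ×ℤ, i≠j} |i−j|^{−α}·|a_i − a_j|^p ≤ C·t^p. -/
/-!
The step `a = a^n(t)` only jumps across two cuts, between `-n` and `1 - n` and between `n - 1`
and `n`, so a pair `(i, j)` contributes to the energy only if one of these cuts separates it, and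
then it contributes at most `t^p |i - j|^{-α}`. The total coupling across a cut does not depend on
where the cut is, and it is finite for `α > 2`: a pair separated by the cut at `0` has
`|i - j| ≥ ‖(i, j)‖_∞`, and `Σ_{x ∈ ℤ²} ‖x‖^{-α} < ∞`. Thus one can take
`C = 2 Σ_{(i,j) separated by 0} |i - j|^{-α}`.
-/

/-- The step of height `t` in a box of size `n`: `a_i = t` if `|i| < n`, `a_i = 0` if `|i| ≥ n`. -/
def stepConf (n : ℕ) (t : ℤ) : ℤ → ℤ := fun i => if |i| < (n : ℤ) then t else 0

lemma summable_norm_rpow_neg_int_prod {s : ℝ} (hs : 2 < s) :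
    Summable fun q : ℤ × ℤ => ‖q‖ ^ (-s) := by
  have hnorm (q : ℤ × ℤ) : ‖(finTwoArrowEquiv ℤ).symm q‖ = ‖q‖ := by
    simp [Pi.norm_def, Prod.norm_def, Fin.univ_succ]
  have hpi := EisensteinSeries.summable_one_div_norm_rpow hs
  exact ((finTwoArrowEquiv ℤ).symm.summable_iff.2 hpi).congr
    fun q => by rw [Function.comp_apply, hnorm]

noncomputable def crossingKernel (s : ℝ) (c : ℤ) (q : ℤ × ℤ) : ℝ :=
  if (q.1 < c ↔ q.2 < c) then 0 else |((q.1 - q.2 : ℤ) : ℝ)| ^ (-s)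

namespace crossingKernel

variable {s : ℝ}

lemma nonneg (s : ℝ) (c : ℤ) (q : ℤ × ℤ) : 0 ≤ crossingKernel s c q := by
  unfold crossingKernel; split_ifs <;> positivity

lemma comp_subRight (s : ℝ) (c : ℤ) :
    crossingKernel s 0 ∘ Equiv.subRight (c, c) = crossingKernel s c := by
  ext ⟨i, j⟩
  simp only [crossingKernel, Function.comp_apply, Equiv.subRight_apply, Prod.mk_sub_mk,
    sub_neg, sub_sub_sub_cancel_right]

lemma le_norm_rpow_neg (hs : 0 ≤ s) (q : ℤ × ℤ) : crossingKernel s 0 q ≤ ‖q‖ ^ (-s) := by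
  obtain ⟨i, j⟩ := q
  unfold crossingKernel
  split_ifs with h
  · positivity
  · rw [Decidable.not_iff] at h
    have hmax : 0 < max |i| |j| ∧ max |i| |j| ≤ |i - j| := by
      simp only [lt_max_iff, max_le_iff, abs_pos, abs_le, le_abs]
      omega
    rw [Prod.norm_def, Int.norm_eq_abs, Int.norm_eq_abs]
    exact Real.rpow_le_rpow_of_nonpos (by exact_mod_cast hmax.1) (by exact_mod_cast hmax.2)
      (by linarith)

lemma rpow_neg_le_add {c d i j : ℤ} (h : ¬((i < c ↔ j < c) ∧ (i < d ↔ j < d))) :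
    |((i - j : ℤ) : ℝ)| ^ (-s) ≤ crossingKernel s c (i, j) + crossingKernel s d (i, j) := by
  have hc := nonneg s c (i, j)
  have hd := nonneg s d (i, j)
  unfold crossingKernel at *
  split_ifs at * <;> first | tauto | linarith

lemma summable (hs : 2 < s) (c : ℤ) : Summable (crossingKernel s c) := by
  rw [← comp_subRight, Equiv.summable_iff]
  exact (summable_norm_rpow_neg_int_prod hs).of_nonneg_of_le (nonneg s 0)
    (le_norm_rpow_neg (by linarith))

lemma tsum_eq_tsum_zero (s : ℝ) (c : ℤ) :
    ∑' q, crossingKernel s c q = ∑' q, crossingKernel s 0 q := by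
  rw [← comp_subRight]
  exact Equiv.tsum_eq _ _

end crossingKernel

lemma stepConf_eq_stepConf (n : ℕ) (t : ℤ) {i j : ℤ} (hn : i < n ↔ j < n)
    (h1n : i < 1 - n ↔ j < 1 - n) : stepConf n t i = stepConf n t j := by
  have hbox : |i| < n ↔ |j| < n := by
    simp only [abs_lt]
    omega
  simp only [stepConf, hbox]

lemma abs_stepConf_sub_le (n : ℕ) {t : ℤ} (ht : 0 ≤ t) (i j : ℤ) :
    |stepConf n t i - stepConf n t j| ≤ t := by
  unfold stepConf
  split_ifs <;> simp [abs_of_nonneg, ht]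

lemma stepConf_energy_le (n : ℕ) {t : ℤ} (ht : 0 ≤ t) {s p : ℝ} (hp : 0 < p) (q : ℤ × ℤ) :
    |((q.1 - q.2 : ℤ) : ℝ)| ^ (-s) * |((stepConf n t q.1 - stepConf n t q.2 : ℤ) : ℝ)| ^ p ≤
      (t : ℝ) ^ p * (crossingKernel s n q + crossingKernel s (1 - n) q) := by
  obtain ⟨i, j⟩ := q
  have hK := add_nonneg (crossingKernel.nonneg s n (i, j)) (crossingKernel.nonneg s (1 - n) (i, j))
  by_cases hsep : (i < n ↔ j < n) ∧ (i < 1 - n ↔ j < 1 - n)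
  · rw [stepConf_eq_stepConf n t hsep.1 hsep.2, sub_self, Int.cast_zero, abs_zero,
      Real.zero_rpow hp.ne', mul_zero]
    positivity
  · have hjump : |((stepConf n t i - stepConf n t j : ℤ) : ℝ)| ≤ t := by
      exact_mod_cast abs_stepConf_sub_le n ht i j
    rw [mul_comm]
    gcongr
    exact crossingKernel.rpow_neg_le_add hsep

theorem step_energy_bound_general (α p : ℝ) (hα : 2 < α) (hp1 : 1 ≤ p) :
    ∃ C : ℝ, ∀ n : ℕ, 1 ≤ n → ∀ t : ℤ, 0 ≤ t →
      Summable (fun q : {q : ℤ × ℤ // q.1 ≠ q.2} =>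
        |((q.1.1 - q.1.2 : ℤ) : ℝ)| ^ (-α) *
          |((stepConf n t q.1.1 - stepConf n t q.1.2 : ℤ) : ℝ)| ^ p) ∧
      ∑' q : {q : ℤ × ℤ // q.1 ≠ q.2},
          |((q.1.1 - q.1.2 : ℤ) : ℝ)| ^ (-α) *
            |((stepConf n t q.1.1 - stepConf n t q.1.2 : ℤ) : ℝ)| ^ p
        ≤ C * (t : ℝ) ^ p := by
  refine ⟨2 * ∑' q, crossingKernel α 0 q, fun n _ t ht => ?_⟩
  set E : ℤ × ℤ → ℝ := fun q =>
    |((q.1 - q.2 : ℤ) : ℝ)| ^ (-α) * |((stepConf n t q.1 - stepConf n t q.2 : ℤ) : ℝ)| ^ p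
  set B : ℤ × ℤ → ℝ := fun q => (t : ℝ) ^ p * (crossingKernel α n q + crossingKernel α (1 - n) q)
  have hB : Summable B :=
    ((crossingKernel.summable hα _).add (crossingKernel.summable hα _)).mul_left _
  have hEB : ∀ q, E q ≤ B q := stepConf_energy_le n ht (by linarith)
  have hE0 : ∀ q, 0 ≤ E q := fun q => by positivity
  have hE : Summable E := hB.of_nonneg_of_le hE0 hEB
  refine ⟨hE.subtype {q | q.1 ≠ q.2}, ?_⟩
  calc ∑' q : {q : ℤ × ℤ // q.1 ≠ q.2}, E q.1 ≤ ∑' q, E q := hE.tsum_subtype_le E _ hE0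
    _ ≤ ∑' q, B q := hE.tsum_le_tsum hEB hB
    _ = _ := by
      rw [tsum_mul_left, (crossingKernel.summable hα _).tsum_add (crossingKernel.summable hα _),
        crossingKernel.tsum_eq_tsum_zero α n,
        crossingKernel.tsum_eq_tsum_zero α (1 - n)]
      ring

/-- **Energy cost of a step.** For `α > 2` and `p ∈ [1,2]` there is a constant `C < ∞` such
that for every `n ≥ 1` and every integer `t ≥ 0`, the long-range interaction energy
`Σ_{i ≠ j} |i-j|^{-α} |a_i - a_j|^p` of the step configuration `a = a^n(t)` converges and
is at most `C t^p`, uniformly in `n`. -/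
theorem step_energy_bound (α p : ℝ) (hα : 2 < α) (hp1 : 1 ≤ p) (hp2 : p ≤ 2) :
    ∃ C : ℝ, ∀ n : ℕ, 1 ≤ n → ∀ t : ℤ, 0 ≤ t →
      Summable (fun q : {q : ℤ × ℤ // q.1 ≠ q.2} =>
        |((q.1.1 - q.1.2 : ℤ) : ℝ)| ^ (-α) *
          |((stepConf n t q.1.1 - stepConf n t q.1.2 : ℤ) : ℝ)| ^ p) ∧
      ∑' q : {q : ℤ × ℤ // q.1 ≠ q.2},
          |((q.1.1 - q.1.2 : ℤ) : ℝ)| ^ (-α) *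
            |((stepConf n t q.1.1 - stepConf n t q.1.2 : ℤ) : ℝ)| ^ p
        ≤ C * (t : ℝ) ^ p :=
  step_energy_bound_general α p hα hp1
end

section
/- Let ν be a probability measure on Ω = ℤ^ℤ (with the product σ-algebra) that is invariant and ergodic under the spatial shift S defined by S(φ)_i = φ_{i+1}, and suppose φ ↦ φ_0 is ν-integrable. Then for every nonzero t ∈ ℤ, ν is NOT absolutely continuous with respect to the pushforward measure ν_t of ν under the height shift T_t (defined by T_t(φ)_i = φ_i + t). -/
/-!
Since `T_t` commutes with `S`, the translate `ν_t` is again an ergodic `S`-invariant probability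
measure, and an invariant probability measure absolutely continuous with respect to an ergodic one
equals it. So `ν = ν_t`, and the law of `φ_0` under `ν` is a probability measure on `ℤ` invariant
under translation by `t ≠ 0`. No such measure exists: it would give the same mass to each of the
infinitely many disjoint points `k + n t`.
-/

open MeasureTheory Filter

/-- The configuration space `Ω = ℤ^ℤ`, carrying the product σ-algebra. -/
abbrev Conf : Type := ℤ → ℤ

/-- The spatial shift `S(φ)_i = φ_{i+1}`. -/
def spatialShift : Conf → Conf := fun φ i => φ (i + 1)

/-- The height shift `T_t(φ)_i = φ_i + t`. -/
def heightShift (t : ℤ) : Conf → Conf := fun φ i => φ i + t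

namespace MeasureTheory.Measure

variable {G : Type*} [AddGroup G] [Countable G] [MeasurableSpace G] [MeasurableSingletonClass G]

theorem measure_singleton_add_nsmul_eq {μ : Measure G} {t : G} (h : μ.map (· + t) = μ)
    (x : G) (n : ℕ) : μ {x + n • t} = μ {x} := by
  induction n with
  | zero => simp
  | succ n ih =>
    rw [← ih]
    conv_lhs => rw [← h, map_apply (measurable_of_countable _) (measurableSet_singleton _)]
    congr 1
    ext y
    simp [succ_nsmul, ← add_assoc]

theorem eq_zero_of_map_add_right_eq_self {μ : Measure G} [IsFiniteMeasure μ] {t : G}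
    (ht : ¬IsOfFinAddOrder t) (h : μ.map (· + t) = μ) : μ = 0 := by
  refine ext_of_singleton fun x => ?_
  by_contra hx
  have hinj : Function.Injective fun n : ℕ => x + n • t :=
    (add_right_injective x).comp (injective_nsmul_iff_not_isOfFinAddOrder.mpr ht)
  have hle : ∑' n : ℕ, μ {x + n • t} ≤ μ Set.univ :=
    (tsum_meas_le_meas_iUnion_of_disjoint μ (fun _ => measurableSet_singleton _)
      fun _ _ hmn => Set.disjoint_singleton.mpr (hinj.ne hmn)).trans
      (measure_mono (Set.subset_univ _))
  simp only [measure_singleton_add_nsmul_eq h, ENNReal.tsum_const_eq_top_of_ne_zero hx,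
    top_le_iff] at hle
  exact measure_ne_top μ _ hle

end MeasureTheory.Measure

theorem measurable_spatialShift : Measurable spatialShift :=
  measurable_pi_lambda _ fun i => measurable_pi_apply (i + 1)

theorem measurable_heightShift (t : ℤ) : Measurable (heightShift t) :=
  measurable_pi_lambda _ fun i => (measurable_pi_apply i).add_const (M := ℤ) t

theorem Ergodic.map_heightShift {ν : Measure Conf} (herg : Ergodic spatialShift ν) (t : ℤ) :
    Ergodic spatialShift (ν.map (heightShift t)) :=
  ((measurable_heightShift t).measurePreserving ν).ergodic_of_ergodic_semiconj herg
    measurable_spatialShift fun _ => rfl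

theorem map_eval_map_heightShift (ν : Measure Conf) (t i : ℤ) :
    (ν.map (heightShift t)).map (· i) = (ν.map (· i)).map (· + t) := by
  rw [Measure.map_map (measurable_pi_apply i) (measurable_heightShift t),
    Measure.map_map (measurable_add_const t) (measurable_pi_apply i)]
  rfl

theorem ergodic_not_absolutelyContinuous_heightShift_general (ν : Measure Conf)
    [IsProbabilityMeasure ν] (herg : Ergodic spatialShift ν)
    (t : ℤ) (ht : t ≠ 0) :
    ¬ ν ≪ ν.map (heightShift t) := by
  intro hac
  have := Measure.isProbabilityMeasure_map (μ := ν) (measurable_heightShift t).aemeasurable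
  have hν : ν = ν.map (heightShift t) :=
    (herg.map_heightShift t).eq_of_absolutelyContinuous herg.toMeasurePreserving hac
  have hlaw : (ν.map (· 0)).map (· + t) = ν.map (· 0) := by
    rw [← map_eval_map_heightShift, ← hν]
  have := Measure.isProbabilityMeasure_map (μ := ν) (measurable_pi_apply (0 : ℤ)).aemeasurable
  exact IsProbabilityMeasure.ne_zero _
    (Measure.eq_zero_of_map_add_right_eq_self ((isOfFinAddOrder_iff_eq_zero t).not.mpr ht) hlaw)

/-- If `ν` is a shift-invariant ergodic probability measure on `ℤ^ℤ` with `φ ↦ φ_0`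
`ν`-integrable, then for every `t ≠ 0`, `ν` is not absolutely continuous with respect to
its height-shifted translate `ν_t = (T_t)_*ν`. -/
theorem ergodic_not_absolutelyContinuous_heightShift (ν : Measure Conf)
    [IsProbabilityMeasure ν] (herg : Ergodic spatialShift ν)
    (hint : Integrable (fun φ : Conf => (φ 0 : ℝ)) ν)
    (t : ℤ) (ht : t ≠ 0) :
    ¬ ν ≪ ν.map (heightShift t) :=
  ergodic_not_absolutelyContinuous_heightShift_general ν herg t ht
end

section
/- Let X be a countable type, H : X → ℝ a function with Z := Σ_{x∈X} exp(−H(x)) < ∞, and let μ be the probability measure on X with μ({x}) = exp(−H(x))/Z. Let T : X → X be a bijection, and suppose the function x ↦ H(T⁻¹(x)) − H(x) is μ-integrable. Then the relative entropy (Kullback–Leibler divergence) of μ with respect to the pushforward T_*μ satisfies RE(μ | T_*μ) = ∫ (H(T⁻¹(x)) − H(x)) dμ(x). -/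
open MeasureTheory Classical

/-- The relative entropy `RE(μ | ν) = ∫ log(dμ/dν) dμ` when `μ ≪ ν` (with value `+∞` when
`μ ≪ ν` fails, or when the log-likelihood ratio fails to be integrable). -/

noncomputable def RE {X : Type*} [MeasurableSpace X] (μ ν : Measure X) : EReal :=
  if μ ≪ ν ∧ Integrable (llr μ ν) μ then ((∫ x, llr μ ν x ∂μ : ℝ) : EReal) else ⊤

/-- **Relative entropy of a Gibbs-type measure and its transform.** If
`μ({x}) = exp(-H(x))/Z` with `Z = Σ_x exp(-H(x)) < ∞` on a countable state space, `T` is a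
bijection, and `x ↦ H(T⁻¹ x) - H(x)` is `μ`-integrable, then
`RE(μ | T_*μ) = ∫ (H(T⁻¹ x) - H(x)) dμ(x)`. -/
theorem relativeEntropy_map_gibbs_countable (X : Type*) [Countable X] [MeasurableSpace X]
    [MeasurableSingletonClass X] (H : X → ℝ)
    (hZ : Summable fun x => Real.exp (-H x))
    (μ : Measure X) [IsProbabilityMeasure μ]
    (hμ : ∀ x : X, μ {x} = ENNReal.ofReal (Real.exp (-H x) / ∑' y : X, Real.exp (-H y)))
    (T : X ≃ X)
    (hint : Integrable (fun x => H (T.symm x) - H x) μ) :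
    RE μ (μ.map T) = ((∫ x, (H (T.symm x) - H x) ∂μ : ℝ) : EReal) := by
  set ν : Measure X := μ.map T with hν
  set Z : ℝ := ∑' y : X, Real.exp (-H y) with hZdef
  have hTm : Measurable (T : X → X) := measurable_of_countable _
  -- singleton masses of ν
  have hνx : ∀ x : X, ν {x} = ENNReal.ofReal (Real.exp (-H (T.symm x)) / Z) := by
    intro x
    rw [hν, Measure.map_apply hTm (measurableSet_singleton x)]
    have : (T : X → X) ⁻¹' {x} = {T.symm x} := by
      ext y; simp [Equiv.eq_symm_apply, eq_comm]
    rw [this, hμ]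
  -- density of μ w.r.t. ν
  set h : X → ENNReal := fun x => ENNReal.ofReal (Real.exp (H (T.symm x) - H x)) with hh
  have hhm : Measurable h := measurable_of_countable _
  have hμν : μ = ν.withDensity h := by
    refine MeasureTheory.Measure.ext_of_singleton fun x => ?_
    rw [withDensity_apply _ (measurableSet_singleton x), lintegral_singleton, hνx, hμ, hh,
      ← ENNReal.ofReal_mul (Real.exp_nonneg _)]
    congr 1
    rw [div_eq_mul_inv, div_eq_mul_inv, ← mul_assoc, ← Real.exp_add]
    ring_nf
  have hac : μ ≪ ν := hμν ▸ withDensity_absolutelyContinuous ν h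
  have hsf : SigmaFinite ν := by
    have : IsProbabilityMeasure ν := Measure.isProbabilityMeasure_map hTm.aemeasurable
    infer_instance
  have hrn : μ.rnDeriv ν =ᵐ[ν] h := hμν ▸ Measure.rnDeriv_withDensity ν hhm
  have hllr : llr μ ν =ᵐ[μ] fun x => H (T.symm x) - H x := by
    filter_upwards [hac.ae_le hrn] with x hx
    show Real.log (μ.rnDeriv ν x).toReal = _
    rw [hx, hh, ENNReal.toReal_ofReal (Real.exp_nonneg _), Real.log_exp]
  have hint' : Integrable (llr μ ν) μ := hint.congr hllr.symm
  rw [RE, if_pos ⟨hac, hint'⟩, integral_congr_ae hllr]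
end
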